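/- Let Γ ≠ {±1} be a discrete subgroup of SL(2,ℝ) in which the only elements fixing ∞ are ±1, containing no parabolic element, such that the radii of the isometric spheres I(g), g ∈ Γ \ {±1}, are bounded above, the family {int I(g) : g ∈ Γ \ {±1}} is locally finite in ℍ, and only finitely many isometric spheres of Γ are relevant. Let α be the largest and β the smallest real number with ∂K ⊆ {z ∈ ℍ : α ≤ Re z ≤ β}, and suppose there is g ∈ Γ \ {±1} such that I₁ = I(g) and I₂ = I(g⁻¹) are relevant, α is an endpoint of the interval under I₁ (i.e., α equals the center of I₁ minus its radius) and β is an endpoint of the interval under I₂ (i.e., β equals the center of I₂ plus its radius). Then either Γ is generated by g and −1, or there exists h ∈ Γ \ {±1} such that I₃ = I(h) is relevant, I₃ ∉ {I₁, I₂}, the summit s(I₃) lies in ∂K, and Re s(I₁) < Re s(I₃) < Re s(I₂). -/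

import Mathlib

/-!
If some element of `Γ` is not `±gⁿ`, the candidate for the third sphere is `I(v)` for such a `v`
of maximal radius. It exists because a vertical line under any isometric sphere meets `∂K`, so all
spheres lie over `[α, β]`; with the radius bound this bounds the entries of all elements with
radius above a given value, and discreteness leaves finitely many of them.

Ford's criterion for `v g⁻¹` and `v g`, which are again not `±gⁿ` and so have no larger sphere,
puts the centre of `I(v)` between the discs of `I(g)` and `I(g⁻¹)`. These discs are therefore
disjoint, and the cocycle relation puts the interior of every `I(±gⁿ)` inside them. Hence the
summit of `I(v)` lies strictly outside every isometric sphere not equal to `I(v)`, and local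
finiteness extends this to an arc of `I(v)` around the summit, which then lies on `∂K`.
-/

open Complex Matrix Filter

noncomputable section

abbrev SL2R := Matrix.SpecialLinearGroup (Fin 2) ℝ

/-- The upper half-plane, as a subset of `ℂ`. -/
def UH : Set ℂ := {z : ℂ | 0 < z.im}

/-- Möbius action of `SL(2,ℝ)` on `ℂ`. -/
def moeb (g : SL2R) (z : ℂ) : ℂ :=
  ((g 0 0 : ℂ) * z + (g 0 1 : ℂ)) / ((g 1 0 : ℂ) * z + (g 1 1 : ℂ))

/-- The isometric sphere of `g` (requires `g 1 0 ≠ 0` to be meaningful). -/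
def isoSphere (g : SL2R) : Set ℂ :=
  {z ∈ UH | ‖(g 1 0 : ℂ) * z + (g 1 1 : ℂ)‖ = 1}

/-- The interior of the isometric sphere of `g`. -/
def isoInt (g : SL2R) : Set ℂ :=
  {z ∈ UH | ‖(g 1 0 : ℂ) * z + (g 1 1 : ℂ)‖ < 1}

/-- The exterior of the isometric sphere of `g`. -/
def isoExt (g : SL2R) : Set ℂ :=
  {z ∈ UH | 1 < ‖(g 1 0 : ℂ) * z + (g 1 1 : ℂ)‖}

/-- `g = 1` or `g = -1` (stated at the matrix level). -/
def IsPMOne (g : SL2R) : Prop :=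
  (g : Matrix (Fin 2) (Fin 2) ℝ) = 1 ∨ (g : Matrix (Fin 2) (Fin 2) ℝ) = -1

/-- Discreteness of a subgroup of `SL(2,ℝ)`: every element is isolated
(entrywise, which is equivalent to discreteness in the matrix topology). -/
def IsDiscreteSubgroup (Γ : Subgroup SL2R) : Prop :=
  ∀ g ∈ Γ, ∃ ε > (0 : ℝ), ∀ h ∈ Γ,
    (∀ i j, |(h : Matrix (Fin 2) (Fin 2) ℝ) i j - (g : Matrix (Fin 2) (Fin 2) ℝ) i j| < ε) → h = g

/-- The parabolic translation `t_λ = [[1,λ],[0,1]]` as an element of `SL(2,ℝ)`. -/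
def tMat (l : ℝ) : SL2R := ⟨!![1, l; 0, 1], by norm_num [Matrix.det_fin_two_of]⟩

/-- The common exterior `K` of all isometric spheres of `Γ`. -/
def commonExt (Γ : Subgroup SL2R) : Set ℂ :=
  ⋂ g ∈ {g : SL2R | g ∈ Γ ∧ ¬ IsPMOne g}, isoExt g

/-- An isometric sphere is relevant if it meets the frontier (in `ℍ`) of the
common exterior in more than one point. -/
def IsRelevant (Γ : Subgroup SL2R) (g : SL2R) : Prop :=
  (isoSphere g ∩ (frontier (commonExt Γ) ∩ UH)).Nontrivial

/-- The summit `-d/c + i/|c|` of the isometric sphere of `g`. -/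
def summit (g : SL2R) : ℂ :=
  ((-(g 1 1) / g 1 0 : ℝ) : ℂ) + ((1 / |g 1 0| : ℝ) : ℂ) * Complex.I

open Topology

def isoCenter (g : SL2R) : ℝ := -(g 1 1) / g 1 0

def isoRadius (g : SL2R) : ℝ := 1 / |g 1 0|

def isoShadow (g : SL2R) : Set ℝ :=
  Set.Icc (isoCenter g - isoRadius g) (isoCenter g + isoRadius g)

section Geometry

variable {g : SL2R}

lemma isoRadius_pos (hc : g 1 0 ≠ 0) : 0 < isoRadius g := by
  unfold isoRadius; positivity

@[simp] lemma SL2R_inv_apply_one_zero (g : SL2R) : g⁻¹ 1 0 = -g 1 0 := by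
  simp [Matrix.SpecialLinearGroup.SL2_inv_expl]

@[simp] lemma SL2R_inv_apply_one_one (g : SL2R) : g⁻¹ 1 1 = g 0 0 := by
  simp [Matrix.SpecialLinearGroup.SL2_inv_expl]

@[simp] lemma SL2R_inv_apply_zero_zero (g : SL2R) : g⁻¹ 0 0 = g 1 1 := by
  simp [Matrix.SpecialLinearGroup.SL2_inv_expl]

lemma SL2R_det_apply (g : SL2R) : g 0 0 * g 1 1 - g 0 1 * g 1 0 = 1 := by
  have := g.det_coe
  rwa [Matrix.det_fin_two] at this

lemma isoCenter_inv (g : SL2R) : isoCenter g⁻¹ = g 0 0 / g 1 0 := by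
  simp [isoCenter, neg_div_neg_eq]

lemma norm_denom_eq_dist_div (hc : g 1 0 ≠ 0) (z : ℂ) :
    ‖(g 1 0 : ℂ) * z + g 1 1‖ = dist z (isoCenter g) / isoRadius g := by
  have hc' : (g 1 0 : ℂ) ≠ 0 := by exact_mod_cast hc
  have : (g 1 0 : ℂ) * z + g 1 1 = g 1 0 * (z - isoCenter g) := by
    simp only [isoCenter]; push_cast; field_simp; ring
  rw [this, norm_mul, Complex.norm_real, Real.norm_eq_abs, Complex.dist_eq, isoRadius,
    div_div_eq_mul_div, div_one, mul_comm]

lemma isoInt_eq (hc : g 1 0 ≠ 0) :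
    isoInt g = UH ∩ Metric.ball (isoCenter g : ℂ) (isoRadius g) := by
  ext z
  simp [isoInt, norm_denom_eq_dist_div hc, div_lt_one (isoRadius_pos hc)]

lemma isoSphere_eq (hc : g 1 0 ≠ 0) :
    isoSphere g = UH ∩ Metric.sphere (isoCenter g : ℂ) (isoRadius g) := by
  ext z
  simp [isoSphere, norm_denom_eq_dist_div hc, div_eq_one_iff_eq (isoRadius_pos hc).ne',
    Complex.dist_eq]

lemma isoExt_eq (hc : g 1 0 ≠ 0) :
    isoExt g = UH \ Metric.closedBall (isoCenter g : ℂ) (isoRadius g) := by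
  ext z
  simp [isoExt, norm_denom_eq_dist_div hc, one_lt_div (isoRadius_pos hc)]

lemma isoSphere_disjoint_isoExt (g : SL2R) : Disjoint (isoSphere g) (isoExt g) :=
  Set.disjoint_left.2 fun _ hs he => he.2.ne' hs.2

lemma isoInt_disjoint_isoExt (g : SL2R) : Disjoint (isoInt g) (isoExt g) :=
  Set.disjoint_left.2 fun _ hi he => hi.2.not_gt he.2

lemma isoInt_disjoint_isoSphere (g : SL2R) : Disjoint (isoInt g) (isoSphere g) :=
  Set.disjoint_left.2 fun _ hi hs => hi.2.ne hs.2

lemma closure_isoInt_subset (hc : g 1 0 ≠ 0) :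
    closure (isoInt g) ⊆ Metric.closedBall (isoCenter g : ℂ) (isoRadius g) :=
  closure_minimal ((isoInt_eq hc).trans_subset
    (Set.inter_subset_right.trans Metric.ball_subset_closedBall)) Metric.isClosed_closedBall

lemma summit_eq (g : SL2R) : summit g = isoCenter g + isoRadius g * Complex.I := rfl

lemma summit_re (g : SL2R) : (summit g).re = isoCenter g := by simp [summit_eq]

lemma summit_im (g : SL2R) : (summit g).im = isoRadius g := by simp [summit_eq]

lemma dist_summit_sq (g : SL2R) (x : ℝ) :
    dist (summit g) x ^ 2 = (isoCenter g - x) ^ 2 + isoRadius g ^ 2 := by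
  rw [Complex.dist_eq, summit_eq, add_sub_right_comm, ← Complex.ofReal_sub,
    Complex.norm_add_mul_I, Real.sq_sqrt (by positivity)]

lemma summit_mem_isoSphere (hc : g 1 0 ≠ 0) : summit g ∈ isoSphere g := by
  have hr := isoRadius_pos hc
  rw [isoSphere_eq hc]
  refine ⟨by simpa [UH, summit_im] using hr, ?_⟩
  rw [mem_sphere_iff_norm, ← Complex.dist_eq, ← sq_eq_sq₀ dist_nonneg hr.le, dist_summit_sq]
  ring

lemma summit_notMem_closedBall (hg : g 1 0 ≠ 0) {x r : ℝ} (h : r ≤ |isoCenter g - x|) :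
    summit g ∉ Metric.closedBall (x : ℂ) r := by
  have hr := isoRadius_pos hg
  rw [Metric.mem_closedBall, not_le]
  refine h.trans_lt (abs_lt_of_sq_lt_sq ?_ dist_nonneg)
  rw [dist_summit_sq]
  nlinarith

lemma isoSphere_ne_of_le_abs_isoCenter_sub {u v : SL2R} (hu : u 1 0 ≠ 0) (hv : v 1 0 ≠ 0)
    (h : isoRadius u ≤ |isoCenter v - isoCenter u|) : isoSphere v ≠ isoSphere u := by
  intro heq
  have hs := summit_mem_isoSphere hv
  rw [heq, isoSphere_eq hu] at hs
  exact summit_notMem_closedBall hv h (Metric.sphere_subset_closedBall hs.2)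

lemma frequently_mem_isoSphere_ne_summit (hc : g 1 0 ≠ 0) :
    ∃ᶠ w in 𝓝 (summit g), w ∈ isoSphere g ∧ w ≠ summit g := by
  have hr := isoRadius_pos hc
  set f : ℝ → ℂ := fun θ => isoCenter g + isoRadius g * Complex.exp (θ * Complex.I)
  have hf : Tendsto f (𝓝[<] (Real.pi / 2)) (𝓝 (summit g)) := by
    have hcont : Continuous f := by fun_prop
    simpa [f, summit_eq] using (hcont.tendsto (Real.pi / 2)).mono_left nhdsWithin_le_nhds
  refine hf.frequently (Eventually.frequently ?_)
  filter_upwards [Ioo_mem_nhdsLT (show 0 < Real.pi / 2 by positivity)] with θ hθ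
  have hsin : 0 < Real.sin θ := Real.sin_pos_of_pos_of_lt_pi hθ.1 (by linarith [hθ.2, Real.pi_pos])
  have hcos : 0 < Real.cos θ := Real.cos_pos_of_mem_Ioo ⟨by linarith [hθ.1, Real.pi_pos], hθ.2⟩
  refine ⟨?_, fun h => ?_⟩
  · rw [isoSphere_eq hc]
    refine ⟨?_, ?_⟩
    · simp only [UH, Set.mem_ofPred_eq, f, Complex.add_im, Complex.ofReal_im, zero_add,
        Complex.im_ofReal_mul, Complex.exp_ofReal_mul_I_im]
      positivity
    · rw [mem_sphere_iff_norm, add_sub_cancel_left, norm_mul, Complex.norm_exp_ofReal_mul_I,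
        Complex.norm_real, Real.norm_of_nonneg hr.le, mul_one]
  · have hre := congrArg Complex.re h
    simp only [f, summit_re, Complex.add_re, Complex.ofReal_re, Complex.re_ofReal_mul,
      Complex.exp_ofReal_mul_I_re, add_eq_left] at hre
    exact (mul_pos hr hcos).ne' hre

lemma mul_inv_apply_one_zero {v G : SL2R} (hv : v 1 0 ≠ 0) (hG : G 1 0 ≠ 0) :
    (v * G⁻¹) 1 0 = v 1 0 * G 1 0 * (isoCenter v - isoCenter G) := by
  simp only [Matrix.SpecialLinearGroup.coe_mul, Matrix.mul_apply, Fin.sum_univ_two,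
    SL2R_inv_apply_zero_zero, SL2R_inv_apply_one_zero, isoCenter]
  field_simp
  ring

lemma isoRadius_le_abs_isoCenter_sub {v G : SL2R} (hv : v 1 0 ≠ 0) (hG : G 1 0 ≠ 0)
    (h0 : (v * G⁻¹) 1 0 ≠ 0) (hle : isoRadius (v * G⁻¹) ≤ isoRadius v) :
    isoRadius G ≤ |isoCenter v - isoCenter G| := by
  rw [mul_inv_apply_one_zero hv hG] at h0
  have hΔ : 0 < |isoCenter v - isoCenter G| := abs_pos.2 (right_ne_zero_of_mul h0)
  have hv' : 0 < |v 1 0| := abs_pos.2 hv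
  have hG' : 0 < |G 1 0| := abs_pos.2 hG
  simp only [isoRadius, mul_inv_apply_one_zero hv hG, abs_mul] at hle ⊢
  rw [one_div_le_one_div (by positivity) hv'] at hle
  rw [div_le_iff₀ hG']
  nlinarith

end Geometry

section Powers

lemma denom_ne_zero (g : SL2R) {z : ℂ} (hz : 0 < z.im) : (g 1 0 : ℂ) * z + g 1 1 ≠ 0 := by
  intro h
  have him : g 1 0 * z.im = 0 := by simpa using congrArg Complex.im h
  have hc : g 1 0 = 0 := by simpa [hz.ne'] using him
  have hd : g 1 1 = 0 := by simpa [hc] using congrArg Complex.re h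
  simpa [hc, hd] using SL2R_det_apply g

lemma moeb_im_pos (g : SL2R) {z : ℂ} (hz : 0 < z.im) : 0 < (moeb g z).im := by
  have hD := denom_ne_zero g hz
  have him : (moeb g z).im = z.im / Complex.normSq ((g 1 0 : ℂ) * z + g 1 1) := by
    rw [moeb, Complex.div_im, div_sub_div_same]
    congr 1
    simp only [Complex.add_im, Complex.add_re, Complex.mul_im, Complex.mul_re,
      Complex.ofReal_re, Complex.ofReal_im]
    linear_combination z.im * SL2R_det_apply g
  rw [him]
  exact div_pos hz (Complex.normSq_pos.2 hD)

lemma denom_mul (u v : SL2R) {z : ℂ} (hz : 0 < z.im) :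
    ((u * v) 1 0 : ℂ) * z + (u * v) 1 1 =
      ((u 1 0 : ℂ) * moeb v z + u 1 1) * ((v 1 0 : ℂ) * z + v 1 1) := by
  have hD := denom_ne_zero v hz
  simp only [moeb, Matrix.SpecialLinearGroup.coe_mul, Matrix.mul_apply, Fin.sum_univ_two]
  push_cast
  field_simp
  ring

lemma norm_denom_inv_mul (g : SL2R) {z : ℂ} (hz : 0 < z.im) :
    ‖((g⁻¹ : SL2R) 1 0 : ℂ) * moeb g z + (g⁻¹ : SL2R) 1 1‖ * ‖(g 1 0 : ℂ) * z + g 1 1‖ = 1 := by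
  have h := congrArg norm (denom_mul g⁻¹ g hz)
  rw [inv_mul_cancel, norm_mul] at h
  simpa using h.symm

lemma isoInt_subset_isoExt {u w : SL2R} (hu : u 1 0 ≠ 0) (hw : w 1 0 ≠ 0)
    (h : isoRadius u + isoRadius w ≤ |isoCenter u - isoCenter w|) : isoInt u ⊆ isoExt w := by
  rw [isoInt_eq hu, isoExt_eq hw]
  rintro z ⟨hz, hzu⟩
  refine ⟨hz, fun hzw => ?_⟩
  rw [Metric.mem_ball] at hzu
  rw [Metric.mem_closedBall] at hzw
  have := dist_triangle_left (isoCenter u : ℂ) (isoCenter w) z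
  rw [Complex.dist_of_im_eq (by simp), Complex.ofReal_re, Complex.ofReal_re, Real.dist_eq] at this
  linarith

/-- Write `j(h, z)` for `h 1 0 * z + h 1 1`. If `z ∈ isoInt gⁿ⁺¹` but `z ∉ isoInt g`, then
`j(gⁿ⁺¹, z) = j(gⁿ, g z) j(g, z)` puts `g z` in `isoInt gⁿ ⊆ isoInt g`, while
`|j(g⁻¹, g z) j(g, z)| = 1` puts it outside `isoExt g⁻¹ ⊇ isoInt g`. -/
lemma isoInt_pow_subset {g : SL2R} (hg : isoInt g ⊆ isoExt g⁻¹) :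
    ∀ n : ℕ, isoInt (g ^ n) ⊆ isoInt g
  | 0 => fun z hz => by simp [isoInt] at hz
  | n + 1 => by
    rintro z ⟨hz, hzn⟩
    by_contra hzg
    have hgz : 1 ≤ ‖(g 1 0 : ℂ) * z + g 1 1‖ := not_lt.1 fun h => hzg ⟨hz, h⟩
    have hw := moeb_im_pos g hz
    have hinv : ‖((g⁻¹ : SL2R) 1 0 : ℂ) * moeb g z + (g⁻¹ : SL2R) 1 1‖ ≤ 1 := by
      nlinarith [norm_denom_inv_mul g hz, norm_nonneg
        (((g⁻¹ : SL2R) 1 0 : ℂ) * moeb g z + (g⁻¹ : SL2R) 1 1)]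
    have hnext : moeb g z ∈ isoInt (g ^ n) := by
      refine ⟨hw, ?_⟩
      have h1 := congrArg norm (denom_mul (g ^ n) g hz)
      rw [← pow_succ, norm_mul] at h1
      nlinarith [norm_nonneg ((((g ^ n : SL2R) 1 0 : ℝ) : ℂ) * moeb g z + (g ^ n : SL2R) 1 1)]
    exact (hg (isoInt_pow_subset hg n hnext)).2.not_ge hinv

lemma isoInt_neg (g : SL2R) : isoInt (-g) = isoInt g := by
  ext z
  simp only [isoInt, Matrix.SpecialLinearGroup.coe_neg, Matrix.neg_apply,
    Complex.ofReal_neg, neg_mul, ← neg_add, norm_neg]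

lemma isPMOne_iff {u : SL2R} : IsPMOne u ↔ u = 1 ∨ u = -1 := by
  refine or_congr ?_ ?_
  · rw [← Matrix.SpecialLinearGroup.coe_one]
    exact Subtype.coe_injective.eq_iff
  · rw [← Matrix.SpecialLinearGroup.coe_one, ← Matrix.SpecialLinearGroup.coe_neg]
    exact Subtype.coe_injective.eq_iff

lemma isPMOne_inv_iff {u : SL2R} : IsPMOne u⁻¹ ↔ IsPMOne u := by
  simp only [isPMOne_iff, inv_eq_one, inv_eq_iff_eq_inv (b := (-1 : SL2R)), inv_neg_one]

def IsPMPow (g h : SL2R) : Prop :=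
  ∃ n : ℤ, (h : Matrix (Fin 2) (Fin 2) ℝ) = ↑(g ^ n) ∨ (h : Matrix (Fin 2) (Fin 2) ℝ) = -↑(g ^ n)

lemma isPMPow_iff {g h : SL2R} : IsPMPow g h ↔ ∃ n : ℤ, h = g ^ n ∨ h = -g ^ n := by
  refine exists_congr fun n => or_congr Subtype.coe_injective.eq_iff ?_
  rw [← Matrix.SpecialLinearGroup.coe_neg]
  exact Subtype.coe_injective.eq_iff

lemma IsPMOne.isPMPow {h : SL2R} (g : SL2R) (hh : IsPMOne h) : IsPMPow g h :=
  ⟨0, by simpa [IsPMOne] using hh⟩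

lemma IsPMPow.of_mul_zpow {g h : SL2R} {m : ℤ} (hh : IsPMPow g (h * g ^ m)) : IsPMPow g h := by
  obtain ⟨n, hn | hn⟩ := isPMPow_iff.1 hh <;> refine isPMPow_iff.2 ⟨n - m, ?_⟩
  · left; rw [_root_.zpow_sub, ← hn, mul_inv_cancel_right]
  · right; rw [_root_.zpow_sub, ← neg_mul, ← hn, mul_inv_cancel_right]

lemma isoInt_zpow_subset {g : SL2R} (h₁ : isoInt g ⊆ isoExt g⁻¹) (h₂ : isoInt g⁻¹ ⊆ isoExt g)
    (n : ℤ) : isoInt (g ^ n) ⊆ isoInt g ∪ isoInt g⁻¹ := by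
  obtain ⟨k, rfl | rfl⟩ := Int.eq_nat_or_neg n
  · rw [zpow_natCast]
    exact (isoInt_pow_subset h₁ k).trans Set.subset_union_left
  · rw [_root_.zpow_neg, zpow_natCast, ← inv_pow]
    exact (isoInt_pow_subset (by rwa [inv_inv]) k).trans Set.subset_union_right

lemma IsPMPow.isoInt_subset {g u : SL2R} (h₁ : isoInt g ⊆ isoExt g⁻¹)
    (h₂ : isoInt g⁻¹ ⊆ isoExt g) (hu : IsPMPow g u) : isoInt u ⊆ isoInt g ∪ isoInt g⁻¹ := by
  obtain ⟨n, rfl | rfl⟩ := isPMPow_iff.1 hu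
  exacts [isoInt_zpow_subset h₁ h₂ n, (isoInt_neg _).trans_subset (isoInt_zpow_subset h₁ h₂ n)]

end Powers

lemma IsPreconnected.inter_frontier_nonempty {X : Type*} [TopologicalSpace X] {s t : Set X}
    (hs : IsPreconnected s) (hst : (s ∩ t).Nonempty) (hst' : (s \ t).Nonempty) :
    (s ∩ frontier t).Nonempty := by
  by_contra h
  have hcover : s ⊆ interior t ∪ (closure t)ᶜ := fun x hx => by
    by_contra hx'
    simp only [Set.mem_union, Set.mem_compl_iff, not_or, not_not] at hx'
    exact h ⟨x, hx, hx'.2, hx'.1⟩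
  obtain ⟨x, hxs, hxt⟩ := hst
  obtain ⟨y, hys, hyt⟩ := hst'
  obtain ⟨w, -, hw, hw'⟩ := hs _ _ isOpen_interior isClosed_closure.isOpen_compl hcover
    ⟨x, hxs, (hcover hxs).resolve_right (not_not.2 (subset_closure hxt))⟩
    ⟨y, hys, (hcover hys).resolve_left fun h => hyt (interior_subset h)⟩
  exact hw' (interior_subset_closure hw)

section CommonExterior

variable {Γ : Subgroup SL2R}

lemma mem_commonExt {z : ℂ} : z ∈ commonExt Γ ↔ ∀ u ∈ Γ, ¬IsPMOne u → z ∈ isoExt u := by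
  simp [commonExt]

lemma mem_commonExt_of_lt_im (hstab : ∀ u ∈ Γ, u 1 0 = 0 → IsPMOne u) {R : ℝ}
    (hR : ∀ u ∈ Γ, ¬IsPMOne u → isoRadius u ≤ R) {z : ℂ} (hz : 0 < z.im) (hRz : R < z.im) :
    z ∈ commonExt Γ := by
  refine mem_commonExt.2 fun u hu hpm => ?_
  rw [isoExt_eq fun h => hpm (hstab u hu h)]
  refine ⟨hz, fun hzu => ?_⟩
  rw [Metric.mem_closedBall, Complex.dist_eq] at hzu
  have := Complex.abs_im_le_norm (z - isoCenter u)
  simp only [Complex.sub_im, Complex.ofReal_im, sub_zero] at this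
  linarith [hR u hu hpm, le_abs_self z.im]

lemma norm_lt_norm_add_mul_I {w : ℂ} (hw : 0 ≤ w.im) {t : ℝ} (ht : 0 < t) :
    ‖w‖ < ‖w + t * Complex.I‖ := by
  rw [← sq_lt_sq₀ (norm_nonneg _) (norm_nonneg _), Complex.sq_norm, Complex.sq_norm,
    Complex.normSq_apply, Complex.normSq_apply]
  simp only [Complex.add_re, Complex.add_im, Complex.mul_re, Complex.mul_im, Complex.ofReal_re,
    Complex.ofReal_im, Complex.I_re, Complex.I_im]
  nlinarith

/-- Pushing `z` upwards moves it away from every centre on `ℝ`. -/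
lemma mem_closure_commonExt (hstab : ∀ u ∈ Γ, u 1 0 = 0 → IsPMOne u) {z : ℂ} (hz : z ∈ UH)
    (hout : ∀ u ∈ Γ, ¬IsPMOne u → z ∉ isoInt u) : z ∈ closure (commonExt Γ) := by
  have hlim : Tendsto (fun t : ℝ => z + t * Complex.I) (𝓝[>] 0) (𝓝 z) := by
    have : Continuous fun t : ℝ => z + t * Complex.I := by fun_prop
    simpa using (this.tendsto 0).mono_left nhdsWithin_le_nhds
  refine mem_closure_of_tendsto hlim (eventually_nhdsWithin_of_forall fun t (ht : 0 < t) => ?_)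
  refine mem_commonExt.2 fun u hu hpm => ?_
  have hc : u 1 0 ≠ 0 := fun h => hpm (hstab u hu h)
  have hzu := hout u hu hpm
  have him : 0 ≤ z.im := le_of_lt hz
  rw [isoInt_eq hc, Set.mem_inter_iff, not_and, Metric.mem_ball, not_lt] at hzu
  rw [isoExt_eq hc, Set.mem_sdiff, Metric.mem_closedBall, not_le, Complex.dist_eq,
    add_sub_right_comm]
  refine ⟨by simp [UH, Complex.add_im]; exact add_pos_of_pos_of_nonneg hz ht.le, ?_⟩
  refine (hzu hz).trans_lt ?_
  rw [Complex.dist_eq]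
  exact norm_lt_norm_add_mul_I (by simpa using him) ht

lemma mem_frontier_commonExt (hstab : ∀ u ∈ Γ, u 1 0 = 0 → IsPMOne u) {v : SL2R} (hv : v ∈ Γ)
    (hvpm : ¬IsPMOne v) {z : ℂ} (hzv : z ∈ isoSphere v)
    (hout : ∀ u ∈ Γ, ¬IsPMOne u → z ∉ isoInt u) : z ∈ frontier (commonExt Γ) :=
  ⟨mem_closure_commonExt hstab hzv.1 hout, fun hint =>
    Set.disjoint_left.1 (isoSphere_disjoint_isoExt v) hzv
      (mem_commonExt.1 (interior_subset hint) v hv hvpm)⟩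

lemma exists_mem_isoInt_re_eq {u : SL2R} (hc : u 1 0 ≠ 0) {x : ℝ}
    (hx : |x - isoCenter u| < isoRadius u) :
    ∃ y : ℝ, 0 < y ∧ (x + y * Complex.I : ℂ) ∈ isoInt u := by
  have hr := isoRadius_pos hc
  have hs : 0 < isoRadius u ^ 2 - (x - isoCenter u) ^ 2 := by
    nlinarith [sq_abs (x - isoCenter u), abs_nonneg (x - isoCenter u)]
  refine ⟨√(isoRadius u ^ 2 - (x - isoCenter u) ^ 2) / 2, by positivity, ?_⟩
  rw [isoInt_eq hc]
  refine ⟨by simpa [UH] using hs, ?_⟩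
  rw [Metric.mem_ball, Complex.dist_eq, add_sub_right_comm, ← Complex.ofReal_sub,
    Complex.norm_add_mul_I, Real.sqrt_lt' hr, div_pow, Real.sq_sqrt hs.le]
  linarith

lemma exists_frontier_commonExt_re_eq (hstab : ∀ u ∈ Γ, u 1 0 = 0 → IsPMOne u) {R : ℝ}
    (hR : ∀ u ∈ Γ, ¬IsPMOne u → isoRadius u ≤ R) {u : SL2R} (hu : u ∈ Γ) (hpm : ¬IsPMOne u)
    {x : ℝ} (hx : |x - isoCenter u| < isoRadius u) :
    ∃ z ∈ frontier (commonExt Γ) ∩ UH, z.re = x := by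
  obtain ⟨y, hy, hyu⟩ := exists_mem_isoInt_re_eq (fun h => hpm (hstab u hu h)) hx
  have hlow : (x + y * Complex.I : ℂ) ∉ commonExt Γ := fun h =>
    Set.disjoint_left.1 (isoInt_disjoint_isoExt u) hyu (mem_commonExt.1 h u hu hpm)
  set M := max R y + 1
  have hyM : y ≤ M := by linarith [le_max_right R y]
  have hhigh : (x + M * Complex.I : ℂ) ∈ commonExt Γ :=
    mem_commonExt_of_lt_im hstab hR (by simp; linarith) (by simp; linarith [le_max_left R y])
  have hconn := (isPreconnected_Icc (a := y) (b := M)).image (fun t : ℝ => (x + t * Complex.I : ℂ))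
    (by fun_prop : Continuous fun t : ℝ => (x + t * Complex.I : ℂ)).continuousOn
  obtain ⟨_, ⟨t, ht, rfl⟩, hfr⟩ := hconn.inter_frontier_nonempty
    ⟨_, ⟨M, ⟨hyM, le_rfl⟩, rfl⟩, hhigh⟩ ⟨_, ⟨y, ⟨le_rfl, hyM⟩, rfl⟩, hlow⟩
  exact ⟨_, ⟨hfr, by simp [UH]; linarith [ht.1]⟩, by simp⟩

lemma isoShadow_subset_Icc (hstab : ∀ u ∈ Γ, u 1 0 = 0 → IsPMOne u) {R : ℝ}
    (hR : ∀ u ∈ Γ, ¬IsPMOne u → isoRadius u ≤ R) {α β : ℝ}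
    (hα : ∀ z ∈ frontier (commonExt Γ) ∩ UH, α ≤ z.re)
    (hβ : ∀ z ∈ frontier (commonExt Γ) ∩ UH, z.re ≤ β) {u : SL2R} (hu : u ∈ Γ)
    (hpm : ¬IsPMOne u) : isoShadow u ⊆ Set.Icc α β := by
  have hr := isoRadius_pos fun h => hpm (hstab u hu h)
  rw [isoShadow, ← closure_Ioo (by linarith)]
  refine closure_minimal (fun x hx => ?_) isClosed_Icc
  obtain ⟨z, hz, rfl⟩ := exists_frontier_commonExt_re_eq hstab hR hu hpm (x := x)
    (abs_sub_lt_iff.2 ⟨by linarith [hx.2], by linarith [hx.1]⟩)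
  exact ⟨hα z hz, hβ z hz⟩

lemma le_isoCenter_sub_isoRadius_and_add_le (hstab : ∀ u ∈ Γ, u 1 0 = 0 → IsPMOne u) {R : ℝ}
    (hR : ∀ u ∈ Γ, ¬IsPMOne u → isoRadius u ≤ R) {α β : ℝ}
    (hα : ∀ z ∈ frontier (commonExt Γ) ∩ UH, α ≤ z.re)
    (hβ : ∀ z ∈ frontier (commonExt Γ) ∩ UH, z.re ≤ β) {u : SL2R} (hu : u ∈ Γ)
    (hpm : ¬IsPMOne u) : α ≤ isoCenter u - isoRadius u ∧ isoCenter u + isoRadius u ≤ β :=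
  (Set.Icc_subset_Icc_iff (by linarith [isoRadius_pos fun h => hpm (hstab u hu h)])).1
    (isoShadow_subset_Icc hstab hR hα hβ hu hpm)

end CommonExterior

section Finiteness

variable {Γ : Subgroup SL2R}

lemma IsDiscreteSubgroup.discreteTopology (hdisc : IsDiscreteSubgroup Γ) : DiscreteTopology Γ := by
  refine discreteTopology_iff_isOpen_singleton.2 fun ⟨g, hg⟩ => ?_
  obtain ⟨ε, hε, hiso⟩ := hdisc g hg
  have hopen : IsOpen {h : SL2R | ∀ i j, |h i j - g i j| < ε} := by
    simp only [Set.ofPred_forall]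
    exact isOpen_iInter_of_finite fun i => isOpen_iInter_of_finite fun j =>
      isOpen_lt (by fun_prop) continuous_const
  convert hopen.preimage continuous_subtype_val
  ext ⟨h, hh⟩
  simp only [Set.mem_singleton_iff, Subtype.mk.injEq, Set.mem_preimage, Set.mem_ofPred_eq]
  exact ⟨by rintro rfl; simpa using hε, hiso h hh⟩

lemma isCompact_setOf_abs_apply_le (C : ℝ) : IsCompact {u : SL2R | ∀ i j, |u i j| ≤ C} := by
  have hbox : IsCompact (Set.univ.pi fun _ => Set.univ.pi fun _ => Set.Icc (-C) C :
      Set (Matrix (Fin 2) (Fin 2) ℝ)) :=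
    isCompact_univ_pi fun _ => isCompact_univ_pi fun _ => isCompact_Icc
  have hpre : IsCompact ((fun u : SL2R => (u : Matrix (Fin 2) (Fin 2) ℝ)) ⁻¹'
      Set.univ.pi fun _ => Set.univ.pi fun _ => Set.Icc (-C) C) :=
    Matrix.SpecialLinearGroup.isClosedEmbedding_val.isCompact_preimage hbox
  convert hpre using 1
  ext u
  simp only [abs_le, Set.mem_ofPred_eq]
  exact ⟨fun h i _ j _ => h i j, fun h i j => h i trivial j trivial⟩

lemma IsDiscreteSubgroup.finite_abs_apply_le (hdisc : IsDiscreteSubgroup Γ) (C : ℝ) :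
    {u | u ∈ Γ ∧ ∀ i j, |u i j| ≤ C}.Finite := by
  have := hdisc.discreteTopology
  refine ((isCompact_setOf_abs_apply_le C).inter_left Subgroup.isClosed_of_discrete).finite ?_
  exact (SetLike.isDiscrete_iff_discreteTopology.2 ‹_›).mono Set.inter_subset_left

/-- The entries of `u` are `c = ±1/r`, `d = -c · isoCenter u`, `a = c · isoCenter u⁻¹`,
and `b = (ad - 1)/c`. -/
lemma abs_apply_le_of_isoCenter_bounds {u : SL2R} (hc : u 1 0 ≠ 0) {M ρ R : ℝ} (hρ : 0 < ρ)
    (hM : |isoCenter u| ≤ M) (hM' : |isoCenter u⁻¹| ≤ M) (hρu : ρ ≤ isoRadius u)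
    (hRu : isoRadius u ≤ R) (i j : Fin 2) :
    |u i j| ≤ max (1 / ρ) (max (M / ρ) (((M / ρ) ^ 2 + 1) * R)) := by
  have hc' : 0 < |u 1 0| := abs_pos.2 hc
  have hcρ : |u 1 0| ≤ 1 / ρ := (le_one_div hρ hc').1 hρu
  have hscaled : ∀ x : ℝ, |x| ≤ M → |x * u 1 0| ≤ M / ρ := fun x hx => by
    rw [abs_mul, ← mul_one_div]
    exact mul_le_mul hx hcρ hc'.le ((abs_nonneg x).trans hx)
  have hd : |u 1 1| ≤ M / ρ := by
    convert hscaled _ (abs_neg (isoCenter u) ▸ hM) using 2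
    simp only [isoCenter]; field_simp
  have ha : |u 0 0| ≤ M / ρ := by
    convert hscaled _ hM' using 2
    rw [isoCenter_inv]; field_simp
  have hb : |u 0 1| ≤ ((M / ρ) ^ 2 + 1) * R := by
    have hb' : u 0 1 = (u 0 0 * u 1 1 - 1) * (1 / u 1 0) := by
      field_simp; linarith [SL2R_det_apply u]
    rw [hb', abs_mul, abs_div, abs_one]
    refine mul_le_mul ((abs_sub _ _).trans ?_) hRu (by positivity) (by positivity)
    have hM0 : 0 ≤ M / ρ := div_nonneg ((abs_nonneg _).trans hM) hρ.le
    rw [abs_mul, abs_one, sq]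
    linarith [mul_le_mul ha hd (abs_nonneg _) hM0]
  fin_cases i <;> fin_cases j <;> simp only [Fin.zero_eta, Fin.mk_one]
  · exact ha.trans ((le_max_left _ _).trans (le_max_right _ _))
  · exact hb.trans ((le_max_right _ _).trans (le_max_right _ _))
  · exact hcρ.trans (le_max_left _ _)
  · exact hd.trans ((le_max_left _ _).trans (le_max_right _ _))

lemma finite_setOf_le_isoRadius (hdisc : IsDiscreteSubgroup Γ)
    (hstab : ∀ u ∈ Γ, u 1 0 = 0 → IsPMOne u) {R : ℝ}
    (hR : ∀ u ∈ Γ, ¬IsPMOne u → isoRadius u ≤ R) {α β : ℝ}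
    (hα : ∀ z ∈ frontier (commonExt Γ) ∩ UH, α ≤ z.re)
    (hβ : ∀ z ∈ frontier (commonExt Γ) ∩ UH, z.re ≤ β) {ρ : ℝ} (hρ : 0 < ρ) :
    {u | u ∈ Γ ∧ ¬IsPMOne u ∧ ρ ≤ isoRadius u}.Finite := by
  set M := max |α| |β|
  have hcenter : ∀ w ∈ Γ, ¬IsPMOne w → |isoCenter w| ≤ M := fun w hw hwpm => by
    have hshadow := le_isoCenter_sub_isoRadius_and_add_le hstab hR hα hβ hw hwpm
    have hr := isoRadius_pos fun h => hwpm (hstab w hw h)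
    rw [abs_le]
    constructor <;> linarith [le_max_left |α| |β|, le_max_right |α| |β|, neg_abs_le α,
      le_abs_self β]
  refine (hdisc.finite_abs_apply_le (max (1 / ρ) (max (M / ρ) (((M / ρ) ^ 2 + 1) * R)))).subset
    fun u ⟨hu, hpm, hρu⟩ => ⟨hu, ?_⟩
  exact abs_apply_le_of_isoCenter_bounds (fun h => hpm (hstab u hu h)) hρ
    (hcenter u hu hpm) (hcenter _ (inv_mem hu) (isPMOne_inv_iff.not.2 hpm)) hρu (hR u hu hpm)

lemma exists_isoRadius_max_of_not_isPMPow (hdisc : IsDiscreteSubgroup Γ)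
    (hstab : ∀ u ∈ Γ, u 1 0 = 0 → IsPMOne u) {R : ℝ}
    (hR : ∀ u ∈ Γ, ¬IsPMOne u → isoRadius u ≤ R) {α β : ℝ}
    (hα : ∀ z ∈ frontier (commonExt Γ) ∩ UH, α ≤ z.re)
    (hβ : ∀ z ∈ frontier (commonExt Γ) ∩ UH, z.re ≤ β) {g h₀ : SL2R} (hh₀ : h₀ ∈ Γ)
    (hnp : ¬IsPMPow g h₀) :
    ∃ v ∈ Γ, ¬IsPMPow g v ∧ ∀ u ∈ Γ, ¬IsPMPow g u → isoRadius u ≤ isoRadius v := by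
  have hpm : ∀ u, ¬IsPMPow g u → ¬IsPMOne u := fun u hu h => hu (h.isPMPow g)
  have hfin : {u | u ∈ Γ ∧ ¬IsPMPow g u ∧ isoRadius h₀ ≤ isoRadius u}.Finite :=
    (finite_setOf_le_isoRadius hdisc hstab hR hα hβ
      (isoRadius_pos fun h => hpm _ hnp (hstab _ hh₀ h))).subset
      fun u ⟨hu, hnu, hle⟩ => ⟨hu, hpm u hnu, hle⟩
  obtain ⟨v, ⟨hv, hnv, hv₀⟩, hmax⟩ :=
    Set.exists_max_image _ isoRadius hfin ⟨h₀, hh₀, hnp, le_rfl⟩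
  refine ⟨v, hv, hnv, fun u hu hnu => ?_⟩
  rcases le_total (isoRadius h₀) (isoRadius u) with h | h
  exacts [hmax u ⟨hu, hnu, h⟩, h.trans hv₀]

end Finiteness

section Relevance

variable {Γ : Subgroup SL2R}

/-- Local finiteness lets the separation at the summit spread to the nearby points of `I(v)`,
which then lie on `∂K` as well. -/
lemma summit_mem_frontier_and_isRelevant (hstab : ∀ u ∈ Γ, u 1 0 = 0 → IsPMOne u)
    (hlf : ∀ z ∈ UH, ∃ U ∈ 𝓝 z,
      {u : SL2R | u ∈ Γ ∧ ¬IsPMOne u ∧ (isoInt u ∩ U).Nonempty}.Finite)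
    {v : SL2R} (hv : v ∈ Γ) (hvpm : ¬IsPMOne v)
    (hsep : ∀ u ∈ Γ, ¬IsPMOne u →
      summit v ∉ closure (isoInt u) ∨ Disjoint (isoInt u) (isoSphere v)) :
    summit v ∈ frontier (commonExt Γ) ∩ UH ∧ IsRelevant Γ v := by
  have hc : v 1 0 ≠ 0 := fun h => hvpm (hstab v hv h)
  have hs := summit_mem_isoSphere hc
  obtain ⟨U, hU, hfin⟩ := hlf _ hs.1
  have hnear : ∀ᶠ w in 𝓝 (summit v),
      w ∈ isoSphere v → ∀ u ∈ Γ, ¬IsPMOne u → w ∉ isoInt u := by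
    have hB : ∀ᶠ w in 𝓝 (summit v), ∀ u ∈ {u : SL2R | u ∈ Γ ∧ ¬IsPMOne u ∧ (isoInt u ∩ U).Nonempty},
        w ∈ isoSphere v → w ∉ isoInt u := by
      refine (eventually_all_finite hfin).2 fun u ⟨hu, hpm, _⟩ => ?_
      rcases hsep u hu hpm with h | h
      · filter_upwards [isClosed_closure.isOpen_compl.mem_nhds h] with w hw _ hwu
        exact hw (subset_closure hwu)
      · exact Eventually.of_forall fun w hws hwu => Set.disjoint_left.1 h hwu hws
    filter_upwards [hB, hU] with w hw hwU hws u hu hpm hwu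
    exact hw u ⟨hu, hpm, w, hwu, hwU⟩ hws hwu
  have hfront : ∀ w ∈ isoSphere v, (∀ u ∈ Γ, ¬IsPMOne u → w ∉ isoInt u) →
      w ∈ frontier (commonExt Γ) ∩ UH :=
    fun w hws hw => ⟨mem_frontier_commonExt hstab hv hvpm hws hw, hws.1⟩
  obtain ⟨w, hw, hws, hne⟩ := (hnear.and_frequently (frequently_mem_isoSphere_ne_summit hc)).exists
  have hsv := hfront _ hs (hnear.self_of_nhds hs)
  exact ⟨hsv, summit v, ⟨hs, hsv⟩, w, ⟨hws, hfront w hws (hw hws)⟩, hne.symm⟩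

end Relevance

section MaximalSphere

variable {Γ : Subgroup SL2R} {g v : SL2R}

lemma isoRadius_zpow_le_abs_isoCenter_sub (hstab : ∀ u ∈ Γ, u 1 0 = 0 → IsPMOne u)
    (hg : g ∈ Γ) (hv : v ∈ Γ) (hnv : ¬IsPMPow g v)
    (hmax : ∀ u ∈ Γ, ¬IsPMPow g u → isoRadius u ≤ isoRadius v) (m : ℤ) (hm : (g ^ m) 1 0 ≠ 0) :
    isoRadius (g ^ m) ≤ |isoCenter v - isoCenter (g ^ m)| := by
  have hw : ¬IsPMPow g (v * (g ^ m)⁻¹) := fun h => hnv (by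
    rw [← _root_.zpow_neg] at h; exact h.of_mul_zpow)
  have hwΓ : v * (g ^ m)⁻¹ ∈ Γ := mul_mem hv (inv_mem (zpow_mem hg m))
  exact isoRadius_le_abs_isoCenter_sub (fun h => hnv ((hstab v hv h).isPMPow g)) hm
    (fun h => hw ((hstab _ hwΓ h).isPMPow g)) (hmax _ hwΓ hw)

/-- Ford's criterion against `g` and `g⁻¹` puts the centre of `I(v)` outside both discs, and the
bounds on the shadow of `I(v)` decide on which side. -/
lemma isoCenter_mem_gap (hstab : ∀ u ∈ Γ, u 1 0 = 0 → IsPMOne u) {R : ℝ}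
    (hR : ∀ u ∈ Γ, ¬IsPMOne u → isoRadius u ≤ R)
    (hα : ∀ z ∈ frontier (commonExt Γ) ∩ UH, isoCenter g - isoRadius g ≤ z.re)
    (hβ : ∀ z ∈ frontier (commonExt Γ) ∩ UH, z.re ≤ isoCenter g⁻¹ + isoRadius g⁻¹)
    (hg : g ∈ Γ) (hgpm : ¬IsPMOne g) (hv : v ∈ Γ) (hnv : ¬IsPMPow g v)
    (hmax : ∀ u ∈ Γ, ¬IsPMPow g u → isoRadius u ≤ isoRadius v) :
    isoCenter g + isoRadius g ≤ isoCenter v ∧ isoCenter v + isoRadius g⁻¹ ≤ isoCenter g⁻¹ := by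
  have hvpm : ¬IsPMOne v := fun h => hnv (h.isPMPow g)
  have hc : g 1 0 ≠ 0 := fun h => hgpm (hstab g hg h)
  have hc' : g⁻¹ 1 0 ≠ 0 := by simpa using hc
  have hrv := isoRadius_pos fun h => hvpm (hstab v hv h)
  have hshadow := le_isoCenter_sub_isoRadius_and_add_le hstab hR hα hβ hv hvpm
  have hford := isoRadius_zpow_le_abs_isoCenter_sub hstab hg hv hnv hmax 1 (by simpa using hc)
  have hford' := isoRadius_zpow_le_abs_isoCenter_sub hstab hg hv hnv hmax (-1)
    (by simpa using hc')
  rw [zpow_one] at hford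
  rw [_root_.zpow_neg_one] at hford'
  constructor
  · linarith [(le_abs'.1 hford).resolve_left (by linarith)]
  · linarith [(le_abs'.1 hford').resolve_right (by linarith)]

/-- Spheres of `±gⁿ` lie under `I(g) ∪ I(g⁻¹)`, away from `summit v`; any other sphere is no larger
than `I(v)`, so it reaches `summit v` only if it equals `I(v)`. -/
lemma summit_separated (hstab : ∀ u ∈ Γ, u 1 0 = 0 → IsPMOne u) (hg : g ∈ Γ) (hgpm : ¬IsPMOne g)
    (hv : v ∈ Γ) (hnv : ¬IsPMPow g v)
    (hmax : ∀ u ∈ Γ, ¬IsPMPow g u → isoRadius u ≤ isoRadius v)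
    (hleft : isoCenter g + isoRadius g ≤ isoCenter v)
    (hright : isoCenter v + isoRadius g⁻¹ ≤ isoCenter g⁻¹) :
    ∀ u ∈ Γ, ¬IsPMOne u → summit v ∉ closure (isoInt u) ∨ Disjoint (isoInt u) (isoSphere v) := by
  have hc : g 1 0 ≠ 0 := fun h => hgpm (hstab g hg h)
  have hc' : g⁻¹ 1 0 ≠ 0 := by simpa using hc
  have hcv : v 1 0 ≠ 0 := fun h => hnv ((hstab v hv h).isPMPow g)
  have hr := isoRadius_pos hc
  have hr' := isoRadius_pos hc'
  have hgap : isoRadius g + isoRadius g⁻¹ ≤ |isoCenter g - isoCenter g⁻¹| := by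
    rw [abs_sub_comm, abs_of_nonneg (by linarith)]
    linarith
  intro u hu hpm
  have hcu : u 1 0 ≠ 0 := fun h => hpm (hstab u hu h)
  by_cases hpow : IsPMPow g u
  · left
    intro hsu
    have hsub := (closure_mono (hpow.isoInt_subset (isoInt_subset_isoExt hc hc' hgap)
      (isoInt_subset_isoExt hc' hc (by rwa [abs_sub_comm, add_comm])))).trans
      closure_union.subset
    rcases hsub hsu with h | h
    · exact summit_notMem_closedBall hcv (by rw [abs_of_nonneg (by linarith)]; linarith)
        (closure_isoInt_subset hc h)
    · exact summit_notMem_closedBall hcv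
        (by rw [abs_sub_comm, abs_of_nonneg (by linarith)]; linarith)
        (closure_isoInt_subset hc' h)
  by_cases hlt : isoRadius u < dist (summit v) (isoCenter u)
  · exact Or.inl fun h => (closure_isoInt_subset hcu h).not_gt hlt
  right
  have hru := hmax u hu hpow
  have hsq := dist_summit_sq v (isoCenter u)
  have hdist : isoRadius v ≤ dist (summit v) (isoCenter u) :=
    le_of_pow_le_pow_left₀ two_ne_zero dist_nonneg (by nlinarith)
  have heq : dist (summit v) (isoCenter u) = isoRadius v :=
    le_antisymm ((not_lt.1 hlt).trans hru) hdist
  have hcen : isoCenter u = isoCenter v := by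
    rw [heq] at hsq
    nlinarith [sq_nonneg (isoCenter v - isoCenter u)]
  have hrad : isoRadius u = isoRadius v := by linarith
  rw [isoInt_eq hcu, hcen, hrad, ← isoInt_eq hcv]
  exact isoInt_disjoint_isoSphere v

end MaximalSphere

theorem third_relevant_sphere_general
    (Γ : Subgroup SL2R) (hdisc : IsDiscreteSubgroup Γ)
    (hstab : ∀ g ∈ Γ, g 1 0 = 0 → IsPMOne g)
    (hrad : ∃ R : ℝ, ∀ g ∈ Γ, ¬ IsPMOne g → 1 / |g 1 0| ≤ R)
    (hlf : ∀ z ∈ UH, ∃ U ∈ nhds z,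
      {g : SL2R | g ∈ Γ ∧ ¬ IsPMOne g ∧ (isoInt g ∩ U).Nonempty}.Finite)
    (α β : ℝ)
    (hα : IsGreatest {a : ℝ | ∀ z ∈ frontier (commonExt Γ) ∩ UH, a ≤ z.re} α)
    (hβ : IsLeast {b : ℝ | ∀ z ∈ frontier (commonExt Γ) ∩ UH, z.re ≤ b} β)
    (g : SL2R) (hg : g ∈ Γ) (hgpm : ¬ IsPMOne g)
    (hαend : α = -(g 1 1) / g 1 0 - 1 / |g 1 0|)
    (hβend : β = -((g⁻¹) 1 1) / (g⁻¹) 1 0 + 1 / |(g⁻¹) 1 0|) :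
    (∀ h ∈ Γ, ∃ n : ℤ,
        (h : Matrix (Fin 2) (Fin 2) ℝ) = ((g ^ n : SL2R) : Matrix (Fin 2) (Fin 2) ℝ) ∨
        (h : Matrix (Fin 2) (Fin 2) ℝ) = -((g ^ n : SL2R) : Matrix (Fin 2) (Fin 2) ℝ)) ∨
    (∃ h ∈ Γ, ¬ IsPMOne h ∧ IsRelevant Γ h ∧
        isoSphere h ≠ isoSphere g ∧ isoSphere h ≠ isoSphere g⁻¹ ∧
        summit h ∈ frontier (commonExt Γ) ∩ UH ∧
        (summit g).re < (summit h).re ∧ (summit h).re < (summit g⁻¹).re) := by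
  by_cases hpow : ∀ h ∈ Γ, IsPMPow g h
  · exact Or.inl hpow
  obtain ⟨h₀, hh₀, hnp⟩ := not_forall₂.1 hpow
  obtain ⟨R, hR⟩ := hrad
  subst hαend hβend
  obtain ⟨v, hv, hnv, hmax⟩ :=
    exists_isoRadius_max_of_not_isPMPow hdisc hstab hR hα.1 hβ.1 hh₀ hnp
  have hvpm : ¬IsPMOne v := fun h => hnv (h.isPMPow g)
  have hc : g 1 0 ≠ 0 := fun h => hgpm (hstab g hg h)
  have hc' : g⁻¹ 1 0 ≠ 0 := by simpa using hc
  have hcv : v 1 0 ≠ 0 := fun h => hvpm (hstab v hv h)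
  obtain ⟨hleft, hright⟩ := isoCenter_mem_gap hstab hR hα.1 hβ.1 hg hgpm hv hnv hmax
  obtain ⟨hfront, hrelv⟩ := summit_mem_frontier_and_isRelevant hstab hlf hv hvpm
    (summit_separated hstab hg hgpm hv hnv hmax hleft hright)
  have hr := isoRadius_pos hc
  have hr' := isoRadius_pos hc'
  refine Or.inr ⟨v, hv, hvpm, hrelv, isoSphere_ne_of_le_abs_isoCenter_sub hc hcv ?_,
    isoSphere_ne_of_le_abs_isoCenter_sub hc' hcv ?_, hfront, ?_, ?_⟩
  · rw [abs_of_nonneg (by linarith)]; linarith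
  · rw [abs_sub_comm, abs_of_nonneg (by linarith)]; linarith
  · rw [summit_re, summit_re]; linarith
  · rw [summit_re, summit_re]; linarith

/-- either `Γ` is generated by `g` and `-1`, or there is a third
relevant isometric sphere whose summit lies on the boundary of the common
exterior, strictly between the summits of `I(g)` and `I(g⁻¹)`. -/
theorem third_relevant_sphere
    (Γ : Subgroup SL2R) (hdisc : IsDiscreteSubgroup Γ)
    (hne : ∃ g ∈ Γ, ¬ IsPMOne g)
    (hstab : ∀ g ∈ Γ, g 1 0 = 0 → IsPMOne g)
    (hnopar : ∀ g ∈ Γ, (g 0 0 + g 1 1) ^ 2 = 4 → IsPMOne g)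
    (hrad : ∃ R : ℝ, ∀ g ∈ Γ, ¬ IsPMOne g → 1 / |g 1 0| ≤ R)
    (hlf : ∀ z ∈ UH, ∃ U ∈ nhds z,
      {g : SL2R | g ∈ Γ ∧ ¬ IsPMOne g ∧ (isoInt g ∩ U).Nonempty}.Finite)
    (hfinrel : {S : Set ℂ | ∃ g ∈ Γ, ¬ IsPMOne g ∧ IsRelevant Γ g ∧ S = isoSphere g}.Finite)
    (α β : ℝ)
    (hα : IsGreatest {a : ℝ | ∀ z ∈ frontier (commonExt Γ) ∩ UH, a ≤ z.re} α)
    (hβ : IsLeast {b : ℝ | ∀ z ∈ frontier (commonExt Γ) ∩ UH, z.re ≤ b} β)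
    (g : SL2R) (hg : g ∈ Γ) (hgpm : ¬ IsPMOne g)
    (hrel : IsRelevant Γ g) (hrelinv : IsRelevant Γ g⁻¹)
    (hαend : α = -(g 1 1) / g 1 0 - 1 / |g 1 0|)
    (hβend : β = -((g⁻¹) 1 1) / (g⁻¹) 1 0 + 1 / |(g⁻¹) 1 0|) :
    (∀ h ∈ Γ, ∃ n : ℤ,
        (h : Matrix (Fin 2) (Fin 2) ℝ) = ((g ^ n : SL2R) : Matrix (Fin 2) (Fin 2) ℝ) ∨
        (h : Matrix (Fin 2) (Fin 2) ℝ) = -((g ^ n : SL2R) : Matrix (Fin 2) (Fin 2) ℝ)) ∨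
    (∃ h ∈ Γ, ¬ IsPMOne h ∧ IsRelevant Γ h ∧
        isoSphere h ≠ isoSphere g ∧ isoSphere h ≠ isoSphere g⁻¹ ∧
        summit h ∈ frontier (commonExt Γ) ∩ UH ∧
        (summit g).re < (summit h).re ∧ (summit h).re < (summit g⁻¹).re) :=
  third_relevant_sphere_general Γ hdisc hstab hrad hlf α β hα hβ g hg hgpm hαend hβend
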